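/- Let $a > 0$ and let $\zeta : \mathbb{R} \to \mathbb{R}$ be a twice continuously differentiable $a$-periodic function. Then there is a universal constant $C$ such that $\left(\int_0^a |\zeta'(s)|^{4/3}\, ds\right)^{3/4} \le C \left(\int_0^a \zeta(s)^2\, ds\right)^{1/4} \left(\int_0^a |\zeta''(s)|\, ds\right)^{1/2}$. -/

import Mathlib

open MeasureTheory Set Function Filter Topology

/-!
Let `ζ' p = 0` and `ζ' ≠ 0` on `(p, q)`, so that `ζ` is monotone on `[p, q]`, and put
`A = ∫ ζ²`, `V = ∫ |ζ''|` over `[p, q]`. Then `|ζ'| ≤ V` on `[p, q]`, hence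
`∫ |ζ'|^(4/3) ≤ V^(1/3) δ` with `δ = |ζ q - ζ p|`. At one endpoint `|ζ| ≥ δ / 2`, so `|ζ| ≥ δ / 4`
on an interval of length `δ / (4 V)`; this gives `δ³ ≤ 64 V A` and the local bound
`∫ |ζ'|^(4/3) ≤ 4 A^(1/3) V^(2/3)`.

Young's inequality `A^(1/3) V^(2/3) ≤ (s² A + 2 V / s) / 3` turns the local bound into one that is
additive in the interval, so it can be summed over the countably many components of `{ζ' ≠ 0}` in a
period that starts at a zero of `ζ'` (Rolle). Minimising over `s > 0` gives `C = 4^(3/4)`.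
-/

def complementaryIntervals (Z : Set ℝ) : Set (ℝ × ℝ) :=
  {pq | pq.1 < pq.2 ∧ pq.1 ∈ Z ∧ pq.2 ∈ Z ∧ Disjoint (Ioo pq.1 pq.2) Z}

lemma pairwiseDisjoint_complementaryIntervals (Z : Set ℝ) :
    (complementaryIntervals Z).PairwiseDisjoint (fun pq => Ioo pq.1 pq.2) := by
  rintro ⟨p, q⟩ ⟨-, hp, hq, hpqZ⟩ ⟨p', q'⟩ ⟨-, hp', hq', hpqZ'⟩ hne
  refine Set.disjoint_left.2 fun z hz hz' => hne ?_
  have hp_le : p ≤ p' := not_lt.1 fun h => disjoint_left.1 hpqZ' ⟨h, hz.1.trans hz'.2⟩ hp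
  have hp'_le : p' ≤ p := not_lt.1 fun h => disjoint_left.1 hpqZ ⟨h, hz'.1.trans hz.2⟩ hp'
  have hq_le : q ≤ q' := not_lt.1 fun h => disjoint_left.1 hpqZ ⟨hz.1.trans hz'.2, h⟩ hq'
  have hq'_le : q' ≤ q := not_lt.1 fun h => disjoint_left.1 hpqZ' ⟨hz'.1.trans hz.2, h⟩ hq
  rw [le_antisymm hp_le hp'_le, le_antisymm hq_le hq'_le]

lemma exists_mem_complementaryIntervals {Z : Set ℝ} (hZ : IsClosed Z) {a b x : ℝ}
    (ha : a ∈ Z) (hb : b ∈ Z) (hx : x ∈ Icc a b) (hxZ : x ∉ Z) :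
    ∃ pq ∈ complementaryIntervals Z, a ≤ pq.1 ∧ pq.2 ≤ b ∧ x ∈ Ioo pq.1 pq.2 := by
  have hbdd₁ : BddAbove (Z ∩ Icc a x) := ⟨x, fun y hy => hy.2.2⟩
  have hbdd₂ : BddBelow (Z ∩ Icc x b) := ⟨x, fun y hy => hy.2.1⟩
  have hp := (hZ.inter isClosed_Icc).csSup_mem ⟨a, ha, le_rfl, hx.1⟩ hbdd₁
  have hq := (hZ.inter isClosed_Icc).csInf_mem ⟨b, hb, hx.2, le_rfl⟩ hbdd₂
  have hpx : sSup (Z ∩ Icc a x) < x := hp.2.2.lt_of_ne fun h => hxZ (h ▸ hp.1)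
  have hxq : x < sInf (Z ∩ Icc x b) := hq.2.1.lt_of_ne fun h => hxZ (h ▸ hq.1)
  refine ⟨(sSup (Z ∩ Icc a x), sInf (Z ∩ Icc x b)),
    ⟨hpx.trans hxq, hp.1, hq.1, disjoint_left.2 fun y hy hyZ => ?_⟩, hp.2.1, hq.2.2, hpx, hxq⟩
  rcases le_or_gt y x with hyx | hxy
  · exact hy.1.not_ge (le_csSup hbdd₁ ⟨hyZ, hp.2.1.trans hy.1.le, hyx⟩)
  · exact hy.2.not_ge (csInf_le hbdd₂ ⟨hyZ, hxy.le, hy.2.le.trans hq.2.2⟩)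

theorem integral_le_integral_of_complementaryIntervals {Z : Set ℝ} (hZ : IsClosed Z) {a b : ℝ}
    (ha : a ∈ Z) (hb : b ∈ Z) (hab : a ≤ b) {f g : ℝ → ℝ} (hf : IntegrableOn f (Ioo a b))
    (hg : IntegrableOn g (Ioo a b)) (hg₀ : ∀ x ∈ Ioo a b, 0 ≤ g x) (hfZ : ∀ x ∈ Z, f x = 0)
    (hfg : ∀ pq ∈ complementaryIntervals Z,
      ∫ x in pq.1..pq.2, f x ≤ ∫ x in pq.1..pq.2, g x) :
    ∫ x in a..b, f x ≤ ∫ x in a..b, g x := by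
  set I := {pq ∈ complementaryIntervals Z | a ≤ pq.1 ∧ pq.2 ≤ b}
  have hdisj : I.PairwiseDisjoint fun pq => Ioo pq.1 pq.2 :=
    (pairwiseDisjoint_complementaryIntervals Z).subset (sep_subset _ _)
  have : Countable I := (hdisj.countable_of_isOpen (fun _ _ => isOpen_Ioo)
    fun pq hpq => nonempty_Ioo.2 hpq.1.1).to_subtype
  have hunion : ⋃ i : I, Ioo i.1.1 i.1.2 = Ioo a b \ Z := by
    refine Subset.antisymm (iUnion_subset fun ⟨pq, hpq, hap, hqb⟩ x hx => ?_) fun x hx => ?_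
    · exact ⟨⟨hap.trans_lt hx.1, hx.2.trans_le hqb⟩, disjoint_left.1 hpq.2.2.2 hx⟩
    · obtain ⟨pq, hpq, hap, hqb, hx'⟩ :=
        exists_mem_complementaryIntervals hZ ha hb (Ioo_subset_Icc_self hx.1) hx.2
      exact mem_iUnion.2 ⟨⟨pq, hpq, hap, hqb⟩, hx'⟩
  have hsum : ∀ h : ℝ → ℝ, IntegrableOn h (Ioo a b) →
      HasSum (fun i : I => ∫ x in Ioo i.1.1 i.1.2, h x) (∫ x in Ioo a b \ Z, h x) :=
    fun h hh => hunion ▸ hasSum_integral_iUnion (fun _ => measurableSet_Ioo) hdisj.subtype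
      (hunion ▸ hh.mono_set sdiff_subset)
  have hIoo : ∀ {p q : ℝ} (h : ℝ → ℝ), p ≤ q → ∫ x in p..q, h x = ∫ x in Ioo p q, h x :=
    fun h hpq => by rw [intervalIntegral.integral_of_le hpq, integral_Ioc_eq_integral_Ioo]
  rw [hIoo f hab, hIoo g hab]
  calc ∫ x in Ioo a b, f x = ∫ x in Ioo a b \ Z, f x :=
        setIntegral_eq_of_subset_of_forall_sdiff_eq_zero measurableSet_Ioo sdiff_subset
          fun x hx => hfZ x (not_not.1 fun h => hx.2 ⟨hx.1, h⟩)
    _ ≤ ∫ x in Ioo a b \ Z, g x := hasSum_le (fun ⟨pq, hpq, _⟩ => by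
          simpa only [hIoo _ hpq.1.le] using hfg pq hpq) (hsum f hf) (hsum g hg)
    _ ≤ ∫ x in Ioo a b, g x :=
        setIntegral_mono_set hg ((ae_restrict_iff' measurableSet_Ioo).2 (.of_forall hg₀))
          sdiff_subset.eventuallyLE

lemma IsPreconnected.pos_or_neg_of_ne_zero {α : Type*} [TopologicalSpace α] {s : Set α}
    (hs : IsPreconnected s) {f : α → ℝ} (hf : ContinuousOn f s) (hf₀ : ∀ x ∈ s, f x ≠ 0) :
    (∀ x ∈ s, 0 < f x) ∨ (∀ x ∈ s, f x < 0) := by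
  by_contra! h
  obtain ⟨⟨x, hx, hfx⟩, ⟨y, hy, hfy⟩⟩ := h
  obtain ⟨z, hz, hfz⟩ := (hs.image f hf).Icc_subset ⟨x, hx, rfl⟩ ⟨y, hy, rfl⟩ ⟨hfx, hfy⟩
  exact hf₀ z hz hfz

lemma integral_abs_deriv_eq_abs_sub {f : ℝ → ℝ} (hf : ContDiff ℝ 1 f) {p q : ℝ} (hpq : p ≤ q)
    (hf' : ∀ x ∈ Ioo p q, deriv f x ≠ 0) :
    ∫ x in p..q, |deriv f x| = |f q - f p| := by
  have hc := hf.continuous_deriv le_rfl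
  have hftc : ∫ x in p..q, deriv f x = f q - f p :=
    intervalIntegral.integral_deriv_eq_sub (fun x _ => hf.differentiable one_ne_zero x)
      (hc.intervalIntegrable _ _)
  have hcongr : ∀ {u v : ℝ → ℝ}, EqOn u v (Ioo p q) → ∫ x in p..q, u x = ∫ x in p..q, v x :=
    fun h => by
      simp only [intervalIntegral.integral_of_le hpq, integral_Ioc_eq_integral_Ioo]
      exact setIntegral_congr_fun measurableSet_Ioo h
  have hnonneg : 0 ≤ ∫ x in p..q, |deriv f x| :=
    intervalIntegral.integral_nonneg hpq fun _ _ => abs_nonneg _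
  rcases isPreconnected_Ioo.pos_or_neg_of_ne_zero hc.continuousOn hf' with hpos | hneg
  · rw [hcongr fun x hx => abs_of_pos (hpos x hx), hftc] at hnonneg ⊢
    exact (abs_of_nonneg hnonneg).symm
  · rw [hcongr fun x hx => abs_of_neg (hneg x hx), intervalIntegral.integral_neg, hftc]
      at hnonneg ⊢
    exact (abs_of_nonpos (neg_nonneg.1 hnonneg)).symm

lemma abs_le_integral_abs_deriv {f : ℝ → ℝ} (hf : ContDiff ℝ 1 f) {p q x : ℝ} (hp : f p = 0)
    (hx : x ∈ Icc p q) : |f x| ≤ ∫ y in p..q, |deriv f y| := by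
  have hc := hf.continuous_deriv le_rfl
  have hftc : ∫ y in p..x, deriv f y = f x := by
    rw [intervalIntegral.integral_deriv_eq_sub (fun y _ => hf.differentiable one_ne_zero y)
      (hc.intervalIntegrable _ _), hp, sub_zero]
  calc |f x| = |∫ y in p..x, deriv f y| := by rw [hftc]
    _ ≤ ∫ y in p..x, |deriv f y| := intervalIntegral.abs_integral_le_integral_abs hx.1
    _ ≤ ∫ y in p..q, |deriv f y| := intervalIntegral.integral_mono_interval le_rfl hx.1 hx.2
        (.of_forall fun _ => abs_nonneg _) (hc.abs.intervalIntegrable _ _)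

lemma sq_mul_le_integral_sq {f : ℝ → ℝ} (hf : Continuous f) {p q c L h : ℝ} (hL : 0 ≤ L)
    (hsub : Icc c (c + L) ⊆ Icc p q) (hh : 0 ≤ h) (hfh : ∀ x ∈ Icc c (c + L), h ≤ |f x|) :
    h ^ 2 * L ≤ ∫ x in p..q, f x ^ 2 := by
  have hcont : Continuous fun x => f x ^ 2 := hf.pow 2
  calc h ^ 2 * L = ∫ _ in c..c + L, h ^ 2 := by
        rw [intervalIntegral.integral_const, smul_eq_mul, add_sub_cancel_left, mul_comm]
    _ ≤ ∫ x in c..c + L, f x ^ 2 := intervalIntegral.integral_mono_on (by linarith)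
        intervalIntegrable_const (hcont.intervalIntegrable _ _) fun x hx => by
          simpa only [sq_abs] using pow_le_pow_left₀ hh (hfh x hx) 2
    _ ≤ ∫ x in p..q, f x ^ 2 := intervalIntegral.integral_mono_interval
        (hsub ⟨le_rfl, by linarith⟩).1 (by linarith) (hsub ⟨by linarith, le_rfl⟩).2
        (.of_forall fun _ => sq_nonneg _) (hcont.intervalIntegrable _ _)

lemma abs_sub_pow_three_le_mul_integral_sq {f : ℝ → ℝ} (hf : Differentiable ℝ f) {p q V : ℝ}
    (hpq : p ≤ q) (hV : ∀ x ∈ Icc p q, |deriv f x| ≤ V) :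
    |f q - f p| ^ 3 ≤ 64 * V * ∫ x in p..q, f x ^ 2 := by
  have hV₀ : 0 ≤ V := (abs_nonneg _).trans (hV p ⟨le_rfl, hpq⟩)
  have hA₀ : 0 ≤ ∫ x in p..q, f x ^ 2 := intervalIntegral.integral_nonneg hpq fun _ _ => sq_nonneg _
  rcases (abs_nonneg (f q - f p)).eq_or_lt with hδ | hδ
  · rw [← hδ, zero_pow three_ne_zero]; exact mul_nonneg (mul_nonneg (by norm_num) hV₀) hA₀
  set δ := |f q - f p|
  have hLip : ∀ x ∈ Icc p q, ∀ y ∈ Icc p q, |f x - f y| ≤ V * |x - y| := fun x hx y hy =>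
    (convex_Icc p q).norm_image_sub_le_of_norm_deriv_le (fun z _ => hf z) hV hy hx
  have hδV : δ ≤ V * (q - p) := by
    simpa [abs_of_nonneg (sub_nonneg.2 hpq)] using hLip q ⟨hpq, le_rfl⟩ p ⟨le_rfl, hpq⟩
  have hVpos : 0 < V := pos_of_mul_pos_left (hδ.trans_le hδV) (sub_nonneg.2 hpq)
  set L := δ / (4 * V) with hLdef
  have hL : 0 < L := by positivity
  have hLpq : L ≤ q - p := by
    rw [div_le_iff₀ (by positivity)]; nlinarith
  -- the height `δ / 2` is reached at an endpoint since `δ ≤ |f q| + |f p|`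
  obtain ⟨x₁, hx₁, hfx₁⟩ : ∃ x₁ ∈ Icc p q, δ / 2 ≤ |f x₁| := by
    by_contra! h
    have := h p ⟨le_rfl, hpq⟩
    have := h q ⟨hpq, le_rfl⟩
    linarith [abs_sub (f q) (f p)]
  set c := min x₁ (q - L)
  have hsub : Icc c (c + L) ⊆ Icc p q := Icc_subset_Icc
    (le_min hx₁.1 (by linarith)) (by linarith [min_le_right x₁ (q - L)])
  have hx₁c : x₁ ∈ Icc c (c + L) := ⟨min_le_left _ _, by
    rw [← min_add_add_right, sub_add_cancel]; exact le_min (by linarith) hx₁.2⟩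
  have hlow : ∀ x ∈ Icc c (c + L), δ / 4 ≤ |f x| := fun x hx => by
    have h₁ := hLip x₁ hx₁ x (hsub hx)
    have h₂ : |x₁ - x| ≤ L :=
      abs_sub_le_iff.2 ⟨by linarith [hx.1, hx₁c.2], by linarith [hx.2, hx₁c.1]⟩
    have h₃ : V * L = δ / 4 := by rw [hLdef]; field_simp
    linarith [abs_sub_abs_le_abs_sub (f x₁) (f x), mul_le_mul_of_nonneg_left h₂ hV₀]
  calc δ ^ 3 = 64 * V * ((δ / 4) ^ 2 * L) := by rw [hLdef]; field_simp; ring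
    _ ≤ 64 * V * ∫ x in p..q, f x ^ 2 := mul_le_mul_of_nonneg_left
        (sq_mul_le_integral_sq hf.continuous hL.le hsub (by positivity) hlow) (by positivity)

lemma exists_nonneg_eq_pow_three {x : ℝ} (hx : 0 ≤ x) : ∃ y, 0 ≤ y ∧ x = y ^ 3 :=
  ⟨x ^ (1 / 3 : ℝ), by positivity, by rw [← Real.rpow_natCast, ← Real.rpow_mul hx]; norm_num⟩

lemma pow_three_rpow_div_three {y : ℝ} (hy : 0 ≤ y) (k : ℕ) : (y ^ 3) ^ (k / 3 : ℝ) = y ^ k := by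
  rw [← Real.rpow_natCast y 3, ← Real.rpow_mul hy, ← Real.rpow_natCast]; congr 1; push_cast; ring

lemma rpow_one_third_mul_rpow_two_thirds_le {A V s : ℝ} (hA : 0 ≤ A) (hV : 0 ≤ V) (hs : 0 < s) :
    A ^ (1 / 3 : ℝ) * V ^ (2 / 3 : ℝ) ≤ (s ^ 2 * A + 2 * V / s) / 3 := by
  obtain ⟨a, ha, rfl⟩ := exists_nonneg_eq_pow_three hA
  obtain ⟨v, hv, rfl⟩ := exists_nonneg_eq_pow_three hV
  have key : 0 ≤ (s * a - v) ^ 2 * (s * a + 2 * v) / (3 * s) := by positivity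
  have h₁ := pow_three_rpow_div_three ha 1
  have h₂ := pow_three_rpow_div_three hv 2
  push_cast at h₁ h₂
  rw [h₁, h₂, pow_one, ← sub_nonneg]
  convert key using 1
  field_simp
  ring

lemma le_rpow_one_third_mul_rpow_two_thirds {T A V : ℝ} (hA : 0 ≤ A) (hV : 0 ≤ V)
    (h : ∀ s > 0, T ≤ (s ^ 2 * A + 2 * V / s) / 3) :
    T ≤ A ^ (1 / 3 : ℝ) * V ^ (2 / 3 : ℝ) := by
  obtain ⟨a, ha, rfl⟩ := exists_nonneg_eq_pow_three hA
  obtain ⟨v, hv, rfl⟩ := exists_nonneg_eq_pow_three hV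
  have h₁ := pow_three_rpow_div_three ha 1
  have h₂ := pow_three_rpow_div_three hv 2
  push_cast at h₁ h₂
  rw [h₁, h₂, pow_one]
  -- `s = (v + ε) / (a + ε)` is the optimal choice for `a + ε`, `v + ε` in place of `a`, `v`
  have hε : ∀ ε > 0, T ≤ (a + ε) * (v + ε) ^ 2 := fun ε hε => by
    set s := (v + ε) / (a + ε)
    have hs : 0 < s := by positivity
    calc T ≤ (s ^ 2 * a ^ 3 + 2 * v ^ 3 / s) / 3 := h s hs
      _ ≤ (s ^ 2 * (a + ε) ^ 3 + 2 * (v + ε) ^ 3 / s) / 3 := by gcongr <;> linarith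
      _ = (a + ε) * (v + ε) ^ 2 := by simp only [s]; field_simp; ring
  have hlim : Tendsto (fun ε => (a + ε) * (v + ε) ^ 2) (𝓝[>] 0) (𝓝 (a * v ^ 2)) := by
    have : Continuous fun ε : ℝ => (a + ε) * (v + ε) ^ 2 := by fun_prop
    simpa using (this.tendsto 0).mono_left nhdsWithin_le_nhds
  exact ge_of_tendsto hlim (eventually_nhdsWithin_of_forall hε)

lemma Function.Periodic.deriv {𝕜 F : Type*} [NontriviallyNormedField 𝕜] [NormedAddCommGroup F]
    [NormedSpace 𝕜 F] {f : 𝕜 → F} {c : 𝕜} (hf : Periodic f c) : Periodic (deriv f) c :=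
  fun x => by rw [← deriv_comp_add_const, hf.funext]

theorem integral_abs_deriv_rpow_le_of_forall_deriv_ne_zero {ζ : ℝ → ℝ} (hζ : ContDiff ℝ 2 ζ)
    {p q : ℝ} (hpq : p ≤ q) (hp : deriv ζ p = 0) (hne : ∀ x ∈ Ioo p q, deriv ζ x ≠ 0) :
    ∫ x in p..q, |deriv ζ x| ^ (4 / 3 : ℝ) ≤
      4 * (∫ x in p..q, ζ x ^ 2) ^ (1 / 3 : ℝ) *
        (∫ x in p..q, |deriv (deriv ζ) x|) ^ (2 / 3 : ℝ) := by
  have hζ' : ContDiff ℝ 1 (deriv ζ) := hζ.deriv'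
  have hc := hζ'.continuous
  set A := ∫ x in p..q, ζ x ^ 2
  set V := ∫ x in p..q, |deriv (deriv ζ) x|
  have hsup : ∀ x ∈ Icc p q, |deriv ζ x| ≤ V := fun x hx => abs_le_integral_abs_deriv hζ' hp hx
  have hA : 0 ≤ A := intervalIntegral.integral_nonneg hpq fun _ _ => sq_nonneg _
  have hV : 0 ≤ V := intervalIntegral.integral_nonneg hpq fun _ _ => abs_nonneg _
  have hT : ∫ x in p..q, |deriv ζ x| ^ (4 / 3 : ℝ) ≤ V ^ (1 / 3 : ℝ) * |ζ q - ζ p| := by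
    rw [← integral_abs_deriv_eq_abs_sub (hζ.of_le one_le_two) hpq hne,
      ← intervalIntegral.integral_const_mul]
    refine intervalIntegral.integral_mono_on hpq
      ((hc.abs.rpow_const fun _ => Or.inr (by norm_num)).intervalIntegrable _ _)
      ((continuous_const.mul hc.abs).intervalIntegrable _ _) fun x hx => ?_
    rw [show (4 / 3 : ℝ) = 1 / 3 + 1 by norm_num, Real.rpow_add' (abs_nonneg _) (by norm_num),
      Real.rpow_one]
    gcongr
    exact hsup x hx
  have hδ : |ζ q - ζ p| ^ 3 ≤ 64 * V * A :=
    abs_sub_pow_three_le_mul_integral_sq (hζ.differentiable two_ne_zero) hpq hsup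
  obtain ⟨a, ha, hAa⟩ := exists_nonneg_eq_pow_three hA
  obtain ⟨v, hv, hVv⟩ := exists_nonneg_eq_pow_three hV
  have h₁ := pow_three_rpow_div_three ha 1
  have h₂ := pow_three_rpow_div_three hv 1
  have h₃ := pow_three_rpow_div_three hv 2
  push_cast at h₁ h₂ h₃
  rw [hAa, hVv] at hδ ⊢
  rw [hVv, h₂, pow_one] at hT
  rw [h₁, h₃, pow_one]
  have hδ' : |ζ q - ζ p| ≤ 4 * v * a :=
    le_of_pow_le_pow_left₀ three_ne_zero (by positivity) (by linarith)
  calc _ ≤ v * |ζ q - ζ p| := hT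
    _ ≤ v * (4 * v * a) := by gcongr
    _ = 4 * a * v ^ 2 := by ring

theorem integral_abs_deriv_rpow_le_of_deriv_eq_zero {ζ : ℝ → ℝ} (hζ : ContDiff ℝ 2 ζ) {b c : ℝ}
    (hbc : b ≤ c) (hb : deriv ζ b = 0) (hc : deriv ζ c = 0) :
    ∫ x in b..c, |deriv ζ x| ^ (4 / 3 : ℝ) ≤
      4 * (∫ x in b..c, ζ x ^ 2) ^ (1 / 3 : ℝ) *
        (∫ x in b..c, |deriv (deriv ζ) x|) ^ (2 / 3 : ℝ) := by
  have hζ' : ContDiff ℝ 1 (deriv ζ) := hζ.deriv'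
  have hc₁ := hζ'.continuous
  have hc₂ := hζ'.continuous_deriv le_rfl
  have hA : 0 ≤ ∫ x in b..c, ζ x ^ 2 := intervalIntegral.integral_nonneg hbc fun _ _ => sq_nonneg _
  have hV : 0 ≤ ∫ x in b..c, |deriv (deriv ζ) x| :=
    intervalIntegral.integral_nonneg hbc fun _ _ => abs_nonneg _
  suffices h : ∀ s > 0, (∫ x in b..c, |deriv ζ x| ^ (4 / 3 : ℝ)) / 4 ≤
      (s ^ 2 * (∫ x in b..c, ζ x ^ 2) + 2 * (∫ x in b..c, |deriv (deriv ζ) x|) / s) / 3 by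
    linarith [le_rpow_one_third_mul_rpow_two_thirds hA hV h]
  intro s hs
  set g : ℝ → ℝ := fun x => 4 * (s ^ 2 * ζ x ^ 2 + 2 * |deriv (deriv ζ) x| / s) / 3
  have hg : Continuous g := by fun_prop
  have hg_int : ∀ p q, ∫ x in p..q, g x =
      4 * (s ^ 2 * (∫ x in p..q, ζ x ^ 2) + 2 * (∫ x in p..q, |deriv (deriv ζ) x|) / s) / 3 := by
    intro p q
    simp only [g, intervalIntegral.integral_div, intervalIntegral.integral_const_mul]
    rw [intervalIntegral.integral_add (Continuous.intervalIntegrable (by fun_prop) _ _)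
      (Continuous.intervalIntegrable (by fun_prop) _ _), intervalIntegral.integral_div,
      intervalIntegral.integral_const_mul, intervalIntegral.integral_const_mul]
  have key : ∫ x in b..c, |deriv ζ x| ^ (4 / 3 : ℝ) ≤ ∫ x in b..c, g x := by
    refine integral_le_integral_of_complementaryIntervals (isClosed_eq hc₁ continuous_const)
      (show b ∈ {x | deriv ζ x = 0} from hb) hc hbc
      ((hc₁.abs.rpow_const fun _ => Or.inr (by norm_num)).integrableOn_Icc.mono_set
        Ioo_subset_Icc_self)
      (hg.integrableOn_Icc.mono_set Ioo_subset_Icc_self) (fun x _ => by positivity)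
      (fun x hx => by simp [show deriv ζ x = 0 from hx]) ?_
    rintro ⟨p, q⟩ ⟨hpq, hp, -, hZ⟩
    rw [hg_int]
    refine (integral_abs_deriv_rpow_le_of_forall_deriv_ne_zero hζ hpq.le hp
      fun x hx h => disjoint_left.1 hZ hx h).trans ?_
    rw [mul_assoc, mul_div_assoc]
    gcongr
    exact rpow_one_third_mul_rpow_two_thirds_le
      (intervalIntegral.integral_nonneg hpq.le fun _ _ => sq_nonneg _)
      (intervalIntegral.integral_nonneg hpq.le fun _ _ => abs_nonneg _) hs
  rw [hg_int] at key
  linarith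

/-- Multiplicative interpolation inequality for periodic functions, uniform in the
period `a`. -/
theorem stmt_4 : ∃ C > 0, ∀ (a : ℝ), 0 < a → ∀ (ζ : ℝ → ℝ), ContDiff ℝ 2 ζ →
    (∀ s, ζ (s + a) = ζ s) →
    (∫ s in (0:ℝ)..a, |deriv ζ s| ^ ((4:ℝ)/3)) ^ ((3:ℝ)/4) ≤
      C * (∫ s in (0:ℝ)..a, (ζ s) ^ 2) ^ ((1:ℝ)/4)
        * (∫ s in (0:ℝ)..a, |deriv (deriv ζ) s|) ^ ((1:ℝ)/2) := by
  refine ⟨4 ^ (3 / 4 : ℝ), by positivity, fun a ha ζ hζ hper => ?_⟩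
  have hper : Periodic ζ a := hper
  obtain ⟨x₀, -, hx₀⟩ :=
    exists_deriv_eq_zero ha hζ.continuous.continuousOn (by simpa using (hper 0).symm)
  have hshift : ∀ {F : ℝ → ℝ}, Periodic F a → ∫ x in (0:ℝ)..a, F x = ∫ x in x₀..x₀ + a, F x :=
    fun hF => by simpa using hF.intervalIntegral_add_eq 0 x₀
  have key := integral_abs_deriv_rpow_le_of_deriv_eq_zero hζ (by linarith) hx₀
    ((hper.deriv x₀).trans hx₀)
  rw [← hshift fun x => by simp only [hper.deriv x], ← hshift fun x => by simp only [hper x],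
    ← hshift fun x => by simp only [hper.deriv.deriv x]] at key
  have hA : 0 ≤ ∫ x in (0:ℝ)..a, ζ x ^ 2 :=
    intervalIntegral.integral_nonneg ha.le fun _ _ => sq_nonneg _
  have hV : 0 ≤ ∫ x in (0:ℝ)..a, |deriv (deriv ζ) x| :=
    intervalIntegral.integral_nonneg ha.le fun _ _ => abs_nonneg _
  calc _ ≤ (4 * (∫ x in (0:ℝ)..a, ζ x ^ 2) ^ (1 / 3 : ℝ) *
        (∫ x in (0:ℝ)..a, |deriv (deriv ζ) x|) ^ (2 / 3 : ℝ)) ^ (3 / 4 : ℝ) :=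
      Real.rpow_le_rpow (intervalIntegral.integral_nonneg ha.le fun _ _ => by positivity) key
        (by norm_num)
    _ = _ := by
      rw [Real.mul_rpow (by positivity) (by positivity),
        Real.mul_rpow (by norm_num) (by positivity),
        ← Real.rpow_mul hA, ← Real.rpow_mul hV]
      norm_num
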